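/- Exact right integral of the shifted Legendre scaling functions (Result 2): for all J ≥ 1, n ∈ {1, …, 2^{J−1}}, natural m, and t ∈ [0,1], the right integral ∫_t^1 φ_{n,m}^J(s) ds equals: √(1/2^{J−1}) if t ≤ (n−1)/2^{J−1} and m = 0; 0 if t ≤ (n−1)/2^{J−1} and m ≥ 1; √((2m+1)/2^{J−1}) ∑_{i=0}^{m} ( c_{i,m}/(i+1) ) ( 1 − (2^{J−1} t − n + 1)^{i+1} ) if (n−1)/2^{J−1} < t < n/2^{J−1}; and 0 if t ≥ n/2^{J−1}. -/

import Mathlib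

open MeasureTheory

/-- The coefficients `c_{i,m}` of the shifted Legendre polynomials:
`c_{i,m} = (∏_{j=0}^{m−1} (1+i+j)) / (∏_{j=0, j≠i}^{m} (i−j))` (and `c_{0,0} = 1`). -/
noncomputable def legendreCoeff (m i : ℕ) : ℝ :=
  (∏ j ∈ Finset.range m, ((1 : ℝ) + i + j)) /
    (∏ j ∈ (Finset.range (m + 1)).erase i, ((i : ℝ) - j))

/-- The shifted Legendre polynomial `L_m(t) = ∑_{i=0}^{m} c_{i,m} t^i` on `[0,1]`. -/
noncomputable def shiftedLegendre (m : ℕ) (t : ℝ) : ℝ :=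
  ∑ i ∈ Finset.range (m + 1), legendreCoeff m i * t ^ i

/-- The shifted Legendre scaling function `φ_{n,m}^J` on `[0,1]`:
`φ_{n,m}^J(t) = 2^{(J−1)/2} √(2m+1) L_m(2^{J−1} t − n + 1)` on
`[(n−1)/2^{J−1}, n/2^{J−1})`, and `0` otherwise. -/
noncomputable def scalingFun (J n m : ℕ) (t : ℝ) : ℝ :=
  if ((n : ℝ) - 1) / 2 ^ (J - 1) ≤ t ∧ t < (n : ℝ) / 2 ^ (J - 1) then
    Real.sqrt (2 ^ (J - 1)) * Real.sqrt (2 * m + 1) *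
      shiftedLegendre m (2 ^ (J - 1) * t - n + 1)
  else 0

/-! On its support `φ_{n,m}^J` is `L_m` composed with the affine map `s ↦ 2^{J−1} s − n + 1`, which
sends the right end `n / 2^{J−1}` of the support to `1`; so `∫ₜ¹ φ` reduces to `∫ᵤ¹ L_m`, integrated
termwise. For `t` left of the support this is `∫₀¹ L_m = ∑ c_{i,m} / (i+1)`, which vanishes for
`m ≥ 1`: since `c_{i,m} / (i+1) = q(i) / ∏_{j≠i} (i − j)` with `q(x) = ∏_{j=2}^{m} (x + j)` of
degree `m − 1`, the sum is the `X^m`-coefficient of the Lagrange interpolant of `q` at `0, …, m`,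
that is, of `q` itself. -/

open Finset Set

open Polynomial in
lemma sum_legendreCoeff_div_eq_zero {m : ℕ} (hm : m ≠ 0) :
    ∑ i ∈ range (m + 1), legendreCoeff m i / (i + 1) = 0 := by
  obtain ⟨k, rfl⟩ : ∃ k, m = k + 1 := ⟨m - 1, by omega⟩
  set P : ℝ[X] := ∏ j ∈ range k, (X + C ((j : ℝ) + 2))
  have hP : P.natDegree ≤ k := (natDegree_prod_le _ _).trans
    (by simp only [natDegree_X_add_C, sum_const, card_range, smul_eq_mul, mul_one, le_refl])
  have hdeg : P.degree < #(range (k + 2)) := by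
    rw [card_range]
    exact degree_le_natDegree.trans_lt (by exact_mod_cast (by omega : P.natDegree < k + 2))
  have hcoeff := Lagrange.coeff_eq_sum (v := ((↑) : ℕ → ℝ)) Nat.cast_injective.injOn hdeg
  rw [card_range, show k + 2 - 1 = k + 1 by omega,
    coeff_eq_zero_of_natDegree_lt (by omega)] at hcoeff
  rw [hcoeff]
  refine sum_congr rfl fun i _ => ?_
  have hnum : ∏ j ∈ range (k + 1), ((1 : ℝ) + i + j) = (i + 1) * P.eval (i : ℝ) := by
    rw [prod_range_succ', eval_prod, mul_comm]
    push_cast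
    simp only [eval_add, eval_X, eval_C, add_zero]
    congr 1
    · ring
    · exact prod_congr rfl fun j _ => by ring
  rw [legendreCoeff, hnum, div_right_comm, mul_div_cancel_left₀ _ (by positivity)]

lemma integral_indicator_Ico_eq_integral_max {f : ℝ → ℝ} {a b c t : ℝ} (hab : a ≤ b) (htb : t ≤ b)
    (hbc : b ≤ c) :
    ∫ s in t..c, (Ico a b).indicator f s = ∫ s in max t a..b, f s := by
  rw [intervalIntegral.integral_of_le (htb.trans hbc),
    intervalIntegral.integral_of_le (max_le htb hab), integral_indicator measurableSet_Ico,
    Measure.restrict_restrict measurableSet_Ico]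
  have h : (Ico a b ∩ Ioc t c : Set ℝ) =ᵐ[volume] (Ico a b ∩ Ico t c : Set ℝ) :=
    (ae_eq_refl _).inter Ico_ae_eq_Ioc.symm
  rw [Set.Ico_inter_Ico, max_comm, min_eq_left hbc] at h
  exact setIntegral_congr_set (h.trans Ico_ae_eq_Ioc)

lemma integral_indicator_Ico_eq_zero {f : ℝ → ℝ} {a b c t : ℝ} (hbt : b ≤ t) (hbc : b ≤ c) :
    ∫ s in t..c, (Ico a b).indicator f s = 0 := by
  rw [intervalIntegral.integral_congr (g := fun _ => 0), intervalIntegral.integral_const, smul_zero]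
  intro s hs
  exact indicator_of_notMem (fun h => h.2.not_ge ((le_min hbt hbc).trans hs.1)) f

lemma integral_shiftedLegendre (m : ℕ) (x : ℝ) :
    ∫ u in x..1, shiftedLegendre m u =
      ∑ i ∈ range (m + 1), legendreCoeff m i / (i + 1) * (1 - x ^ (i + 1)) := by
  simp only [shiftedLegendre]
  rw [intervalIntegral.integral_finsetSum (f := fun i u => legendreCoeff m i * u ^ i) fun i _ =>
    (continuous_const.mul (continuous_pow i)).intervalIntegrable _ _]
  refine sum_congr rfl fun i _ => ?_
  rw [intervalIntegral.integral_const_mul, integral_pow, one_pow]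
  ring

lemma integral_shiftedLegendre_comp (m : ℕ) {c : ℝ} (hc : c ≠ 0) (d x : ℝ) :
    ∫ s in x..d / c, shiftedLegendre m (c * s - d + 1) =
      c⁻¹ * ∑ i ∈ range (m + 1), legendreCoeff m i / (i + 1) * (1 - (c * x - d + 1) ^ (i + 1)) := by
  simp_rw [sub_add_eq_add_sub, add_sub_assoc]
  rw [intervalIntegral.integral_comp_mul_add _ hc, mul_div_cancel₀ _ hc, add_sub_cancel,
    integral_shiftedLegendre, smul_eq_mul]

lemma scalingFun_eq_indicator (J n m : ℕ) :
    scalingFun J n m = (Ico (((n : ℝ) - 1) / 2 ^ (J - 1)) (n / 2 ^ (J - 1))).indicator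
      fun s => √(2 ^ (J - 1)) * √(2 * m + 1) * shiftedLegendre m (2 ^ (J - 1) * s - n + 1) := by
  funext s
  simp only [scalingFun, indicator, Set.mem_Ico]

theorem scalingFun_right_integral_general (J : ℕ) (n : ℕ)
    (hn2 : n ≤ 2 ^ (J - 1)) (m : ℕ) (t : ℝ) :
    (t ≤ ((n : ℝ) - 1) / 2 ^ (J - 1) → m = 0 →
      (∫ s in t..(1:ℝ), scalingFun J n m s) = Real.sqrt (1 / 2 ^ (J - 1))) ∧
    (t ≤ ((n : ℝ) - 1) / 2 ^ (J - 1) → 1 ≤ m →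
      (∫ s in t..(1:ℝ), scalingFun J n m s) = 0) ∧
    (((n : ℝ) - 1) / 2 ^ (J - 1) < t → t < (n : ℝ) / 2 ^ (J - 1) →
      (∫ s in t..(1:ℝ), scalingFun J n m s) =
        Real.sqrt ((2 * m + 1) / 2 ^ (J - 1)) *
          ∑ i ∈ Finset.range (m + 1),
            legendreCoeff m i / (i + 1) *
              (1 - (2 ^ (J - 1) * t - n + 1) ^ (i + 1))) ∧
    ((n : ℝ) / 2 ^ (J - 1) ≤ t →
      (∫ s in t..(1:ℝ), scalingFun J n m s) = 0) := by
  have hb : (n : ℝ) / 2 ^ (J - 1) ≤ 1 := (div_le_one (by positivity)).2 (by exact_mod_cast hn2)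
  set h : ℝ := 2 ^ (J - 1)
  have hpos : 0 < h := by positivity
  have hab : ((n : ℝ) - 1) / h ≤ n / h := by gcongr; linarith
  have hnorm : √h * √(2 * m + 1) * h⁻¹ = √((2 * m + 1) / h) := by
    rw [Real.sqrt_div (by positivity), ← div_eq_mul_inv, mul_comm, mul_div_assoc,
      Real.sqrt_div_self', mul_one_div]
  have right_integral : ∀ x ≤ (n : ℝ) / h, ∫ s in x..1, scalingFun J n m s =
      √((2 * m + 1) / h) * ∑ i ∈ range (m + 1),
        legendreCoeff m i / (i + 1) * (1 - (h * max x ((n - 1) / h) - n + 1) ^ (i + 1)) := by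
    intro x hx
    rw [scalingFun_eq_indicator, integral_indicator_Ico_eq_integral_max hab hx hb,
      intervalIntegral.integral_const_mul, integral_shiftedLegendre_comp m hpos.ne', ← mul_assoc,
      hnorm]
  have right_integral_of_le_left : ∀ x ≤ ((n : ℝ) - 1) / h, ∫ s in x..1, scalingFun J n m s =
      √((2 * m + 1) / h) * ∑ i ∈ range (m + 1), legendreCoeff m i / (i + 1) := by
    intro x hx
    rw [right_integral x (hx.trans hab), max_eq_right hx, mul_div_cancel₀ _ hpos.ne']
    simp
  refine ⟨fun hta hm => ?_, fun hta hm => ?_, fun hat htb => ?_, fun hbt => ?_⟩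
  · subst hm
    simp [right_integral_of_le_left t hta, legendreCoeff]
  · rw [right_integral_of_le_left t hta, sum_legendreCoeff_div_eq_zero (by omega), mul_zero]
  · rw [right_integral t htb.le, max_eq_left hat.le]
  · rw [scalingFun_eq_indicator]
    exact integral_indicator_Ico_eq_zero hbt hb

/-- **Exact right integral of the shifted Legendre scaling functions (Result 2)**:
for `J ≥ 1`, `n ∈ {1, …, 2^{J−1}}`, `m : ℕ` and `t ∈ [0,1]`, the integral
`∫ₜ¹ φ_{n,m}^J(s) ds` is given piecewise. -/
theorem scalingFun_right_integral (J : ℕ) (hJ : 1 ≤ J) (n : ℕ)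
    (hn : 1 ≤ n) (hn2 : n ≤ 2 ^ (J - 1)) (m : ℕ) (t : ℝ) (ht : t ∈ Set.Icc (0:ℝ) 1) :
    (t ≤ ((n : ℝ) - 1) / 2 ^ (J - 1) → m = 0 →
      (∫ s in t..(1:ℝ), scalingFun J n m s) = Real.sqrt (1 / 2 ^ (J - 1))) ∧
    (t ≤ ((n : ℝ) - 1) / 2 ^ (J - 1) → 1 ≤ m →
      (∫ s in t..(1:ℝ), scalingFun J n m s) = 0) ∧
    (((n : ℝ) - 1) / 2 ^ (J - 1) < t → t < (n : ℝ) / 2 ^ (J - 1) →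
      (∫ s in t..(1:ℝ), scalingFun J n m s) =
        Real.sqrt ((2 * m + 1) / 2 ^ (J - 1)) *
          ∑ i ∈ Finset.range (m + 1),
            legendreCoeff m i / (i + 1) *
              (1 - (2 ^ (J - 1) * t - n + 1) ^ (i + 1))) ∧
    ((n : ℝ) / 2 ^ (J - 1) ≤ t →
      (∫ s in t..(1:ℝ), scalingFun J n m s) = 0) :=
  scalingFun_right_integral_general J n hn2 m t
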